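/- arXiv:2209.04708 — 2 statements merged into one kernel-verified Lean document; each statement's English description precedes it below -/
import Mathlib

section
/- Let H be a Hopf *-algebra with Haar (invariant) functional h, A a unital *-algebra with a right H-comodule algebra structure ω : A → A ⊗ H, and φ a linear functional on A satisfying (φ ⊗ h)ω = φ. Then for every linear functional ψ on H one has (φ ⊗ ψ)ω = ψ(1)·φ; in particular (φ ⊗ id)ω(x) = φ(x)·1_H for all x ∈ A. -/
open TensorProduct

set_option synthInstance.maxHeartbeats 1000000 in
/-- **Haar-absorbing functionals are invariant:** let `H` be a Hopf *-algebra
with comultiplication `Δ` and normalized two-sided invariant (Haar) functional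
`h`, let `A` be a unital *-algebra with a right `H`-comodule algebra structure
`ω : A → A ⊗ H`, and let `φ` be a linear functional on `A` with
`(φ ⊗ h) ∘ ω = φ`.  Then for every linear functional `ψ` on `H` one has
`(φ ⊗ ψ) ∘ ω = ψ(1) · φ`; in particular `(φ ⊗ id)(ω x) = φ(x) · 1_H` for all
`x ∈ A`. -/
theorem haar_absorbing_functional_invariant
    {H : Type*} [Ring H] [StarRing H] [Algebra ℂ H]
    {A : Type*} [Ring A] [StarRing A] [Algebra ℂ A]
    (Δ : H →ₗ[ℂ] H ⊗[ℂ] H) (h : H →ₗ[ℂ] ℂ)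
    (hh1 : h 1 = 1)
    -- two-sided invariance of the Haar functional: `(h ⊗ id)Δ = (id ⊗ h)Δ = h(·)1`
    (hhl : ∀ x : H, (TensorProduct.lid ℂ H) ((TensorProduct.map h LinearMap.id) (Δ x)) = h x • 1)
    (hhr : ∀ x : H, (TensorProduct.rid ℂ H) ((TensorProduct.map LinearMap.id h) (Δ x)) = h x • 1)
    (ω : A →ₗ[ℂ] A ⊗[ℂ] H)
    -- comodule algebra structure
    (hω1 : ω 1 = 1)
    (hωmul : ∀ x y : A, ω (x * y) = ω x * ω y)
    -- coassociativity of the coaction: `(ω ⊗ id) ∘ ω = (id ⊗ Δ) ∘ ω`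
    (hcoassoc : ∀ x : A,
      (TensorProduct.assoc ℂ A H H) ((TensorProduct.map ω LinearMap.id) (ω x)) =
        (TensorProduct.map LinearMap.id Δ) (ω x))
    (φ : A →ₗ[ℂ] ℂ)
    -- the absorption hypothesis `(φ ⊗ h) ∘ ω = φ`
    (hφ : ∀ x : A, (LinearMap.mul' ℂ ℂ) ((TensorProduct.map φ h) (ω x)) = φ x) :
    (∀ (ψ : H →ₗ[ℂ] ℂ) (x : A),
      (LinearMap.mul' ℂ ℂ) ((TensorProduct.map φ ψ) (ω x)) = ψ 1 * φ x) ∧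
    (∀ x : A,
      (TensorProduct.lid ℂ H) ((TensorProduct.map φ LinearMap.id) (ω x)) = φ x • 1) := by
  classical
  set S : H →ₗ[ℂ] H :=
    (TensorProduct.lid ℂ H).toLinearMap ∘ₗ TensorProduct.map h LinearMap.id ∘ₗ Δ with hSdef
  have hS : ∀ y, S y = h y • 1 := fun y => hhl y
  have key : ∀ x : A,
      (TensorProduct.lid ℂ H) ((TensorProduct.map φ LinearMap.id) (ω x)) = φ x • 1 := by
    intro x
    have hφ' : (LinearMap.mul' ℂ ℂ ∘ₗ TensorProduct.map φ h) ∘ₗ ω = φ :=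
      LinearMap.ext hφ
    have L3 : ∀ v : (A ⊗[ℂ] H) ⊗[ℂ] H,
        (TensorProduct.lid ℂ H) ((TensorProduct.map φ LinearMap.id)
          ((TensorProduct.map LinearMap.id
              ((TensorProduct.lid ℂ H).toLinearMap ∘ₗ TensorProduct.map h LinearMap.id))
            ((TensorProduct.assoc ℂ A H H) v))) =
        (TensorProduct.lid ℂ H)
          ((TensorProduct.map (LinearMap.mul' ℂ ℂ ∘ₗ TensorProduct.map φ h) LinearMap.id) v) := by
      intro v
      induction v using TensorProduct.induction_on with
      | zero => simp only [map_zero, LinearEquiv.map_zero]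
      | tmul p c =>
        induction p using TensorProduct.induction_on with
        | zero => simp only [TensorProduct.zero_tmul, map_zero, LinearEquiv.map_zero]
        | tmul a b =>
          simp only [TensorProduct.assoc_tmul, TensorProduct.map_tmul,
            LinearMap.coe_comp, LinearEquiv.coe_coe, Function.comp_apply,
            LinearMap.id_coe, id_eq, TensorProduct.lid_tmul, LinearMap.mul'_apply,
            TensorProduct.tmul_smul, map_smul, smul_smul]
          all_goals rw [mul_comm]
        | add p q hp hq => simp only [TensorProduct.add_tmul, map_add, hp, hq]
      | add u v hu hv => simp only [map_add, hu, hv]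
    have StepA : ∀ u : A ⊗[ℂ] H,
        (TensorProduct.lid ℂ H) ((TensorProduct.map φ S) u) =
        (LinearMap.mul' ℂ ℂ) ((TensorProduct.map φ h) u) • 1 := by
      intro u
      induction u using TensorProduct.induction_on with
      | zero => simp only [map_zero, LinearEquiv.map_zero, zero_smul]
      | tmul a b =>
        simp only [TensorProduct.map_tmul, TensorProduct.lid_tmul, hS,
          LinearMap.mul'_apply, smul_smul]
        all_goals rw [mul_comm]
      | add u v hu hv => simp only [map_add, hu, hv, add_smul]
    have e1 : TensorProduct.map (LinearMap.mul' ℂ ℂ ∘ₗ TensorProduct.map φ h) (LinearMap.id : H →ₗ[ℂ] H) ∘ₗ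
        TensorProduct.map ω (LinearMap.id : H →ₗ[ℂ] H) = TensorProduct.map φ (LinearMap.id : H →ₗ[ℂ] H) := by
      rw [← TensorProduct.map_comp, hφ', LinearMap.id_comp]
    have e1' : TensorProduct.map φ LinearMap.id (ω x) =
        (TensorProduct.map (LinearMap.mul' ℂ ℂ ∘ₗ TensorProduct.map φ h) LinearMap.id)
          ((TensorProduct.map ω LinearMap.id) (ω x)) := by rw [← e1]; rfl
    have e2 : TensorProduct.map (LinearMap.id : A →ₗ[ℂ] A)
          ((TensorProduct.lid ℂ H).toLinearMap ∘ₗ TensorProduct.map h LinearMap.id) ∘ₗ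
        TensorProduct.map (LinearMap.id : A →ₗ[ℂ] A) Δ = TensorProduct.map (LinearMap.id : A →ₗ[ℂ] A) S := by
      rw [← TensorProduct.map_comp, LinearMap.id_comp, hSdef, LinearMap.comp_assoc]
    have e2' : (TensorProduct.map LinearMap.id
          ((TensorProduct.lid ℂ H).toLinearMap ∘ₗ TensorProduct.map h LinearMap.id))
          ((TensorProduct.map LinearMap.id Δ) (ω x)) =
        TensorProduct.map LinearMap.id S (ω x) := by rw [← e2]; rfl
    have e3 : TensorProduct.map φ (LinearMap.id : H →ₗ[ℂ] H) ∘ₗ TensorProduct.map (LinearMap.id : A →ₗ[ℂ] A) S =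
        TensorProduct.map φ S := by
      rw [← TensorProduct.map_comp, LinearMap.comp_id, LinearMap.id_comp]
    have e3' : TensorProduct.map φ LinearMap.id (TensorProduct.map LinearMap.id S (ω x)) =
        TensorProduct.map φ S (ω x) := by rw [← e3]; rfl
    calc (TensorProduct.lid ℂ H) ((TensorProduct.map φ LinearMap.id) (ω x))
        = (TensorProduct.lid ℂ H)
            ((TensorProduct.map (LinearMap.mul' ℂ ℂ ∘ₗ TensorProduct.map φ h) LinearMap.id)
              ((TensorProduct.map ω LinearMap.id) (ω x))) := by rw [e1']
      _ = (TensorProduct.lid ℂ H) ((TensorProduct.map φ LinearMap.id)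
            ((TensorProduct.map LinearMap.id
                ((TensorProduct.lid ℂ H).toLinearMap ∘ₗ TensorProduct.map h LinearMap.id))
              ((TensorProduct.assoc ℂ A H H)
                ((TensorProduct.map ω LinearMap.id) (ω x))))) := (L3 _).symm
      _ = (TensorProduct.lid ℂ H) ((TensorProduct.map φ LinearMap.id)
            ((TensorProduct.map LinearMap.id
                ((TensorProduct.lid ℂ H).toLinearMap ∘ₗ TensorProduct.map h LinearMap.id))
              ((TensorProduct.map LinearMap.id Δ) (ω x)))) := by rw [hcoassoc x]
      _ = (TensorProduct.lid ℂ H) ((TensorProduct.map φ S) (ω x)) := by rw [e2', e3']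
      _ = (LinearMap.mul' ℂ ℂ) ((TensorProduct.map φ h) (ω x)) • 1 := StepA _
      _ = φ x • 1 := by rw [hφ x]
  refine ⟨?_, key⟩
  intro ψ x
  have L1 : ∀ u : A ⊗[ℂ] H,
      (LinearMap.mul' ℂ ℂ) ((TensorProduct.map φ ψ) u) =
      ψ ((TensorProduct.lid ℂ H) ((TensorProduct.map φ LinearMap.id) u)) := by
    intro u
    induction u using TensorProduct.induction_on with
    | zero => simp only [map_zero, LinearEquiv.map_zero]
    | tmul a b => simp
    | add u v hu hv => simp only [map_add, hu, hv]
  rw [L1, key x, map_smul, smul_eq_mul, mul_comm]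
end

section
/- Let (q_{vw})_{v,w ∈ V} be a quantum permutation matrix in a unital C*-algebra commuting with the adjacency matrix D of a finite simple directed graph 𝒢 (i.e., ∑_u q_{vu} D_{uw} = ∑_u D_{vu} q_{uw} for all v, w). Then for each edge e ∈ 𝒢¹ and each non-edge pair (v, w) ∉ 𝒢¹, q_{s(e)v} q_{r(e)w} = 0. -/
open Finset

section Aux

variable {A : Type*} [CStarAlgebra A] [PartialOrder A] [StarOrderedRing A]

/-- For a self-adjoint idempotent `e` and self-adjoint `p`, the conjugate
`p * e * p` is `star (e * p) * (e * p)`. -/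
lemma aux_conj_eq {e p : A} (he : star e = e) (hee : e * e = e)
    (hp : star p = p) : p * e * p = star (e * p) * (e * p) := by
  rw [star_mul, he, hp]
  simp only [mul_assoc]
  rw [← mul_assoc e e p, hee]

lemma aux_conj_nonneg {e p : A} (he : star e = e) (hee : e * e = e)
    (hp : star p = p) : (0 : A) ≤ p * e * p := by
  rw [aux_conj_eq he hee hp]
  exact star_mul_self_nonneg _

lemma aux_conj_zero {e p : A} (he : star e = e) (hee : e * e = e)
    (hp : star p = p) (h : p * e * p = 0) : e * p = 0 :=
  (CStarRing.star_mul_self_eq_zero_iff _).mp ((aux_conj_eq he hee hp).symm.trans h)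

end Aux

/-- **Commutation with the adjacency matrix forces the edge relations:** let
`(q v w)` be a quantum permutation matrix (entries are self-adjoint
projections, rows and columns sum to `1`) in a unital C*-algebra, commuting
with the adjacency matrix `D` of a finite simple directed graph (i.e.
`∑ᵤ q v u · D u w = ∑ᵤ D v u · q u w` for all `v, w`).  Then for every edge
`(a, b)` and every non-edge `(v, w)` one has `q a v · q b w = 0`. -/
theorem magic_unitary_commuting_with_adjacency
    {A : Type*} [CStarAlgebra A] [PartialOrder A] [StarOrderedRing A]
    {V : Type*} [Fintype V] [DecidableEq V]
    (Edge : V → V → Prop) [DecidableRel Edge]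
    (q : V → V → A)
    (hsa : ∀ v w, star (q v w) = q v w)
    (hidem : ∀ v w, q v w * q v w = q v w)
    (hrow : ∀ v, ∑ w, q v w = 1)
    (hcol : ∀ w, ∑ v, q v w = 1)
    -- `UD = DU`, where `D u w = 1` if `(u, w)` is an edge and `0` otherwise
    (hcomm : ∀ v w, ∑ u, (if Edge u w then q v u else 0) =
      ∑ u, (if Edge v u then q u w else 0)) :
    ∀ a b v w, Edge a b → ¬ Edge v w → q a v * q b w = 0 := by
  intro a b v w hab hnvw
  -- orthogonality within a row
  have orth : ∀ x u u' : V, u ≠ u' → q x u * q x u' = 0 := by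
    intro x u u' huu
    have hsum : ∑ y, q x u' * q x y * q x u' = q x u' := by
      rw [← Finset.sum_mul, ← Finset.mul_sum, hrow, mul_one, hidem]
    have hsum' : ∑ y ∈ univ.erase u', q x u' * q x y * q x u' = 0 := by
      rw [Finset.sum_erase_eq_sub (mem_univ u'), hsum, hidem, hidem, sub_self]
    have hterm : q x u' * q x u * q x u' = 0 :=
      (Finset.sum_eq_zero_iff_of_nonneg
        (fun y _ => aux_conj_nonneg (hsa x y) (hidem x y) (hsa x u'))).mp
        hsum' u (by simp [huu])
    exact aux_conj_zero (hsa x u) (hidem x u) (hsa x u') hterm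
  -- key: q a v * ∑_{Edge a u} q u w = 0
  have key : ∑ u, q a v * (if Edge a u then q u w else 0) = 0 := by
    rw [← Finset.mul_sum, ← hcomm a w, Finset.mul_sum]
    apply Finset.sum_eq_zero
    intro u _
    by_cases h : Edge u w
    · have huv : v ≠ u := fun h' => hnvw (h' ▸ h)
      simp [h, orth a v u huv]
    · simp [h]
  -- conjugate: sum of nonnegative terms vanishes
  have key2 : ∑ u, q a v * (if Edge a u then q u w else 0) * q a v = 0 := by
    rw [← Finset.sum_mul, key, zero_mul]
  have hnn2 : ∀ u ∈ (univ : Finset V),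
      (0:A) ≤ q a v * (if Edge a u then q u w else 0) * q a v := by
    intro u _
    by_cases h : Edge a u
    · rw [if_pos h]; exact aux_conj_nonneg (hsa u w) (hidem u w) (hsa a v)
    · simp [h]
  have hb : q a v * (if Edge a b then q b w else 0) * q a v = 0 :=
    (Finset.sum_eq_zero_iff_of_nonneg hnn2).mp key2 b (mem_univ b)
  rw [if_pos hab] at hb
  have h0 : q b w * q a v = 0 := aux_conj_zero (hsa b w) (hidem b w) (hsa a v) hb
  have := congrArg star h0
  rwa [star_mul, hsa, hsa, star_zero] at this
end
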